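/- Let Γ be a graph and let f : C → Γ be a cycle of length |C| ≥ 4. (1) If f is not isometric, then there exist vertices u, v of C with d_C(u,v) ≥ ⌊|C|/2⌋ − 1 and d_Γ(f(u), f(v)) < d_C(u,v). (2) If, for some ξ ∈ (0,1), f is not ξ-almost isometric, then there exist vertices u, v of C with d_C(u,v) ≥ ⌊|C|/2⌋ − 1 and d_Γ(f(u), f(v)) < ξ·d_C(u,v). -/
import Mathlib


open scoped Classical

noncomputable section

namespace ShortcutGraphs

/-- Path metric on (the geometric realization of) the cycle graph `C` with `n` edges:
points of `C` are parametrized by `ℝ` modulo `n`, with each edge isometric to `[0,1]`. -/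
def cdist (n : ℕ) (p q : ℝ) : ℝ := ⨅ k : ℤ, |p - q + k * (n : ℝ)|

variable {V : Type*}

/-- A cycle of length `n` in the simplicial graph `G`: a nondegenerate combinatorial map
from the cycle graph with `n` edges, recorded by the images of its vertices `0, 1, …, n-1`
(indexed by `ZMod n`); consecutive vertices map to adjacent vertices of `G`. -/
def IsCycle (G : SimpleGraph V) (n : ℕ) (c : ZMod n → V) : Prop :=
  ∀ i : ZMod n, G.Adj (c i) (c (i + 1))

/-- Distance, in the geometric realization of the graph `G` (each edge isometric to `[0,1]`,
equipped with the path metric), between the images under the cycle `c` of the points of the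
cycle graph parametrized by `p` and `q`.  The point parametrized by `p` lies on the edge of
the cycle joining vertex `⌊p⌋` to vertex `⌊p⌋ + 1`, at distance `p - ⌊p⌋` from the former; a
geodesic between two points of a graph either stays within one closed edge (the `if` terms)
or consists of a piece of an edge, a geodesic between two vertices, and a piece of an edge
(the `route` term). -/
def rdist (G : SimpleGraph V) (n : ℕ) (c : ZMod n → V) (p q : ℝ) : ℝ :=
  let i : ZMod n := ((⌊p⌋ : ℤ) : ZMod n)
  let j : ZMod n := ((⌊q⌋ : ℤ) : ZMod n)
  let s : ℝ := Int.fract p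
  let t : ℝ := Int.fract q
  let a : V := c i
  let b : V := c (i + 1)
  let u : V := c j
  let v : V := c (j + 1)
  let route : ℝ :=
    min (min (s + (G.dist a u : ℝ) + t) (s + (G.dist a v : ℝ) + (1 - t)))
        (min ((1 - s) + (G.dist b u : ℝ) + t) ((1 - s) + (G.dist b v : ℝ) + (1 - t)))
  min route
    (min (if a = u ∧ b = v then |s - t| else route)
         (if a = v ∧ b = u then |s + t - 1| else route))

/-- Two points of the cycle graph with `n` edges are antipodal if their distance is `n/2`. -/
def Antipodal (n : ℕ) (p q : ℝ) : Prop := cdist n p q = (n : ℝ) / 2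

/-- The cycle `c` is isometric: it is an isometric embedding at the level of all points of
the geometric realizations. -/
def IsIsometricCycle (G : SimpleGraph V) (n : ℕ) (c : ZMod n → V) : Prop :=
  ∀ p q : ℝ, rdist G n c p q = cdist n p q

/-- The cycle `c` is `ξ`-almost isometric: `d_Γ(f(p), f(q)) ≥ ξ·|C|/2` for every antipodal
pair of points `p, q` of the cycle. -/
def IsAlmostIsometricCycle (G : SimpleGraph V) (n : ℕ) (c : ZMod n → V) (ξ : ℝ) : Prop :=
  ∀ p q : ℝ, Antipodal n p q → ξ * ((n : ℝ) / 2) ≤ rdist G n c p q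

/-- A graph is shortcut if there is a bound `θ` on the lengths of its isometric cycles. -/
def Shortcut (G : SimpleGraph V) : Prop :=
  ∃ θ : ℕ, ∀ (n : ℕ) (c : ZMod n → V), 0 < n → IsCycle G n c → IsIsometricCycle G n c → n ≤ θ

/-- A graph is strongly shortcut if for some `ξ ∈ (0,1)` there is a bound `θ` on the lengths
of its `ξ`-almost isometric cycles. -/
def StronglyShortcut (G : SimpleGraph V) : Prop :=
  ∃ (θ : ℕ) (ξ : ℝ), 0 < ξ ∧ ξ < 1 ∧
    ∀ (n : ℕ) (c : ZMod n → V), 0 < n → IsCycle G n c → IsAlmostIsometricCycle G n c ξ → n ≤ θ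

variable {G : SimpleGraph V} {n : ℕ} {c : ZMod n → V}

lemma cdist_bdd (n : ℕ) (p q : ℝ) : BddBelow (Set.range fun k : ℤ => |p - q + k * (n:ℝ)|) :=
  ⟨0, by rintro x ⟨k, rfl⟩; positivity⟩

lemma cdist_le (n : ℕ) (p q : ℝ) (k : ℤ) : cdist n p q ≤ |p - q + k * n| :=
  ciInf_le (cdist_bdd n p q) k

lemma le_cdist {n : ℕ} {p q x : ℝ} (h : ∀ k : ℤ, x ≤ |p - q + k * n|) : x ≤ cdist n p q :=
  le_ciInf h

lemma cdist_eq_of {n : ℕ} {p q x : ℝ} (l : ℤ) (hx0 : 0 ≤ x) (hxn : x ≤ n)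
    (hpq : p - q = x + l * n) : cdist n p q = min x ((n : ℝ) - x) := by
  apply le_antisymm
  · apply le_min
    · have h1 := cdist_le n p q (-l)
      rw [hpq] at h1
      push_cast at h1
      calc cdist n p q ≤ |x + l * n + (-l) * n| := by push_cast; convert h1 using 3
        _ = x := by rw [show x + l*(n:ℝ) + (-l)*n = x by ring, abs_of_nonneg hx0]
    · have h1 := cdist_le n p q (-l - 1)
      rw [hpq] at h1
      push_cast at h1
      calc cdist n p q ≤ |x + l * n + (-l - 1) * n| := by push_cast; convert h1 using 3
        _ = (n:ℝ) - x := by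
          rw [show x + l*(n:ℝ) + (-l-1)*n = x - n by ring, abs_of_nonpos (by linarith)]
          ring
  · apply le_cdist
    intro k
    rw [hpq, show x + l * (n:ℝ) + k * n = x + (l + k) * n by ring]
    rcases le_or_gt 0 (l + k) with h | h
    · have : (0:ℝ) ≤ ((l + k : ℤ) : ℝ) * n := by positivity
      rw [abs_of_nonneg (by push_cast at this ⊢; linarith)]
      have : (0:ℝ) ≤ ((l+k:ℤ):ℝ) * n := this
      push_cast at this
      calc min x ((n:ℝ) - x) ≤ x := min_le_left _ _
        _ ≤ x + (↑l + ↑k) * n := by linarith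
    · have hk : (l + k : ℤ) ≤ -1 := by omega
      have hk' : ((l + k : ℤ) : ℝ) ≤ -1 := by exact_mod_cast hk
      push_cast at hk'
      have hxk : x + (↑l + ↑k) * (n:ℝ) ≤ x - n := by nlinarith [Nat.cast_nonneg (α := ℝ) n]
      rw [abs_of_nonpos (by linarith)]
      calc min x ((n:ℝ) - x) ≤ (n:ℝ) - x := min_le_right _ _
        _ ≤ -(x + (↑l + ↑k) * n) := by linarith

lemma cdist_int {n : ℕ} (hn : 0 < n) (i j : ℤ) :
    cdist n (i:ℝ) (j:ℝ) = ((min ((j - i) % n) ((n:ℤ) - (j - i) % n) : ℤ) : ℝ) := by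
  have hn' : (n:ℤ) ≠ 0 := by exact_mod_cast hn.ne'
  set m := (j - i) % (n:ℤ) with hm
  have hm0 : 0 ≤ m := Int.emod_nonneg _ hn'
  have hmn : m < n := Int.emod_lt_of_pos _ (by exact_mod_cast hn)
  have hdiv := Int.mul_ediv_add_emod (j - i) n
  -- i - j = (n - m) + (-(j-i)/n - 1) * n
  have key : (i:ℝ) - j = ((n:ℤ) - m : ℤ) + (-( (j - i) / n) - 1 : ℤ) * n := by
    push_cast
    have : ((j:ℝ) - i) = (n:ℝ) * ((((j - i) / n : ℤ)):ℝ) + m := by exact_mod_cast hdiv.symm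
    linarith
  have hm0' : (0:ℝ) ≤ (m:ℝ) := by exact_mod_cast hm0
  have hmn' : (m:ℝ) < (n:ℝ) := by exact_mod_cast hmn
  rw [cdist_eq_of (-( (j - i) / n) - 1) (by push_cast; linarith) (by push_cast; linarith) key]
  push_cast
  rw [min_comm]
  congr 1 <;> ring

lemma cdist_diff_le (n : ℕ) (p q p' q' : ℝ) :
    cdist n p q ≤ cdist n p' q' + |(p - q) - (p' - q')| := by
  rw [← sub_le_iff_le_add]
  apply le_cdist
  intro k
  have h1 := cdist_le n p q k
  have h2 : |p - q + k * n| ≤ |p' - q' + k * n| + |(p - q) - (p' - q')| := by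
    calc |p - q + k * n| = |(p' - q' + k*n) + ((p - q) - (p' - q'))| := by ring_nf
      _ ≤ _ := abs_add_le _ _
  linarith

lemma cdist_lipschitz (n : ℕ) (p q p' q' : ℝ) :
    cdist n p q ≤ cdist n p' q' + |p - p'| + |q - q'| := by
  rw [← sub_le_iff_le_add, ← sub_le_iff_le_add]
  apply le_cdist
  intro k
  have h1 := cdist_le n p q k
  have : |p - q + k * n| ≤ |p' - q' + k * n| + |p - p'| + |q - q'| := by
    have := abs_add_le (p' - q' + k * n + (p - p')) (q' - q)
    have h2 : |q' - q| = |q - q'| := abs_sub_comm _ _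
    have h3 : |p' - q' + ↑k * ↑n + (p - p')| ≤ |p' - q' + k*n| + |p - p'| := abs_add_le _ _
    calc |p - q + k * n| = |(p' - q' + k*n + (p - p')) + (q' - q)| := by ring_nf
      _ ≤ |p' - q' + ↑k * ↑n + (p - p')| + |q' - q| := abs_add_le _ _
      _ ≤ |p' - q' + k*n| + |p - p'| + |q - q'| := by rw [h2] at *; linarith
  linarith


lemma walk_exists (hc : IsCycle G n c) (x : ZMod n) (L : ℕ) :
    ∃ w : G.Walk (c x) (c (x + L)), w.length = L := by
  induction L with
  | zero => exact ⟨(SimpleGraph.Walk.nil).copy rfl (by simp), by simp⟩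
  | succ L ih =>
    obtain ⟨w, hw⟩ := ih
    refine ⟨(w.concat (hc (x + L))).copy rfl (by push_cast; ring), ?_⟩
    rw [SimpleGraph.Walk.length_copy, SimpleGraph.Walk.length_concat, hw]

lemma dist_le_nat (hc : IsCycle G n c) (x : ZMod n) (L : ℕ) :
    G.dist (c x) (c (x + L)) ≤ L := by
  obtain ⟨w, hw⟩ := walk_exists hc x L
  simpa [hw] using SimpleGraph.dist_le w

lemma reachable_cy (hc : IsCycle G n c) (x : ZMod n) (L : ℕ) :
    G.Reachable (c x) (c (x + L)) := by
  obtain ⟨w, hw⟩ := walk_exists hc x L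
  exact ⟨w⟩

lemma rdist_def (G : SimpleGraph V) (n : ℕ) (c : ZMod n → V) (p q : ℝ) :
    rdist G n c p q =
      min (min (min (Int.fract p + (G.dist (c ((⌊p⌋ : ℤ) : ZMod n)) (c ((⌊q⌋ : ℤ) : ZMod n)) : ℝ) + Int.fract q)
                    (Int.fract p + (G.dist (c ((⌊p⌋ : ℤ) : ZMod n)) (c (((⌊q⌋ : ℤ) : ZMod n) + 1)) : ℝ) + (1 - Int.fract q)))
               (min ((1 - Int.fract p) + (G.dist (c (((⌊p⌋ : ℤ) : ZMod n) + 1)) (c ((⌊q⌋ : ℤ) : ZMod n)) : ℝ) + Int.fract q)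
                    ((1 - Int.fract p) + (G.dist (c (((⌊p⌋ : ℤ) : ZMod n) + 1)) (c (((⌊q⌋ : ℤ) : ZMod n) + 1)) : ℝ) + (1 - Int.fract q))))
        (min (if c ((⌊p⌋ : ℤ) : ZMod n) = c ((⌊q⌋ : ℤ) : ZMod n) ∧ c (((⌊p⌋ : ℤ) : ZMod n) + 1) = c (((⌊q⌋ : ℤ) : ZMod n) + 1)
              then |Int.fract p - Int.fract q|
              else min (min (Int.fract p + (G.dist (c ((⌊p⌋ : ℤ) : ZMod n)) (c ((⌊q⌋ : ℤ) : ZMod n)) : ℝ) + Int.fract q)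
                    (Int.fract p + (G.dist (c ((⌊p⌋ : ℤ) : ZMod n)) (c (((⌊q⌋ : ℤ) : ZMod n) + 1)) : ℝ) + (1 - Int.fract q)))
               (min ((1 - Int.fract p) + (G.dist (c (((⌊p⌋ : ℤ) : ZMod n) + 1)) (c ((⌊q⌋ : ℤ) : ZMod n)) : ℝ) + Int.fract q)
                    ((1 - Int.fract p) + (G.dist (c (((⌊p⌋ : ℤ) : ZMod n) + 1)) (c (((⌊q⌋ : ℤ) : ZMod n) + 1)) : ℝ) + (1 - Int.fract q))))
             (if c ((⌊p⌋ : ℤ) : ZMod n) = c (((⌊q⌋ : ℤ) : ZMod n) + 1) ∧ c (((⌊p⌋ : ℤ) : ZMod n) + 1) = c ((⌊q⌋ : ℤ) : ZMod n)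
              then |Int.fract p + Int.fract q - 1|
              else min (min (Int.fract p + (G.dist (c ((⌊p⌋ : ℤ) : ZMod n)) (c ((⌊q⌋ : ℤ) : ZMod n)) : ℝ) + Int.fract q)
                    (Int.fract p + (G.dist (c ((⌊p⌋ : ℤ) : ZMod n)) (c (((⌊q⌋ : ℤ) : ZMod n) + 1)) : ℝ) + (1 - Int.fract q)))
               (min ((1 - Int.fract p) + (G.dist (c (((⌊p⌋ : ℤ) : ZMod n) + 1)) (c ((⌊q⌋ : ℤ) : ZMod n)) : ℝ) + Int.fract q)
                    ((1 - Int.fract p) + (G.dist (c (((⌊p⌋ : ℤ) : ZMod n) + 1)) (c (((⌊q⌋ : ℤ) : ZMod n) + 1)) : ℝ) + (1 - Int.fract q))))) := rfl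

lemma rdist_le_dist (G : SimpleGraph V) (n : ℕ) (c : ZMod n → V) (i j : ℤ) :
    rdist G n c (i:ℝ) (j:ℝ) ≤ (G.dist (c (i : ZMod n)) (c (j : ZMod n)) : ℝ) := by
  rw [rdist_def]
  simp only [Int.floor_intCast, Int.fract_intCast]
  calc _ ≤ (0:ℝ) + (G.dist (c (i : ZMod n)) (c (j : ZMod n)) : ℝ) + 0 :=
        le_trans (min_le_left _ _) (le_trans (min_le_left _ _) (min_le_left _ _))
    _ = _ := by ring


lemma rdist_le_cdist (hc : IsCycle G n c) (p q : ℝ) :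
    rdist G n c p q ≤ cdist n p q := by
  apply le_cdist
  intro k
  set i : ℤ := ⌊p⌋ with hi
  set j : ℤ := ⌊q⌋ with hj
  set s : ℝ := Int.fract p with hs
  set t : ℝ := Int.fract q with ht
  have hps : p = i + s := (Int.floor_add_fract p).symm
  have hqt : q = j + t := (Int.floor_add_fract q).symm
  have hs0 : 0 ≤ s := Int.fract_nonneg p
  have hs1 : s < 1 := Int.fract_lt_one p
  have ht0 : 0 ≤ t := Int.fract_nonneg q
  have ht1 : t < 1 := Int.fract_lt_one q
  set M : ℤ := j - i - k * n with hM
  have habs : |p - q + k * n| = |(M:ℝ) + t - s| := by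
    rw [hps, hqt]
    rw [show (i:ℝ) + s - ((j:ℝ) + t) + k * n = -(((M:ℝ)) + t - s) by
      rw [hM]; push_cast; ring]
    exact abs_neg _
  have hMj : ((M : ZMod n) : ZMod n) + (i : ZMod n) = (j : ZMod n) := by
    rw [hM]
    push_cast
    simp [ZMod.natCast_self]
  rw [habs, rdist_def]
  rcases lt_trichotomy M 0 with hMlt | hMeq | hMgt
  · -- M ≤ -1 : use term2
    have hM1 : M ≤ -1 := by omega
    have hkey : G.dist (c ((i : ZMod n))) (c ((j : ZMod n) + 1)) ≤ (-M - 1).toNat := by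
      have h := dist_le_nat hc ((j : ZMod n) + 1) (-M - 1).toNat
      have heq : (j : ZMod n) + 1 + ((-M - 1).toNat : ZMod n) = (i : ZMod n) := by
        have : (((-M - 1).toNat : ℤ) : ZMod n) = ((-M - 1 : ℤ) : ZMod n) := by
          rw [Int.toNat_of_nonneg (by omega)]
        push_cast at this ⊢
        rw [this]
        push_cast
        have : (M : ZMod n) = (j : ZMod n) - (i : ZMod n) := by
          rw [eq_sub_iff_add_eq]; exact hMj
        rw [this]; ring
      rw [heq] at h
      rwa [SimpleGraph.dist_comm] at h
    have hkey' : (G.dist (c ((i : ZMod n))) (c ((j : ZMod n) + 1)) : ℝ) ≤ -(M:ℝ) - 1 := by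
      have h2 : ((-M - 1).toNat : ℝ) = -(M:ℝ) - 1 := by
        rw [show ((-M - 1).toNat : ℝ) = (((-M-1).toNat : ℤ) : ℝ) by push_cast; ring,
          Int.toNat_of_nonneg (by omega)]
        push_cast; ring
      calc (G.dist (c ((i : ZMod n))) (c ((j : ZMod n) + 1)) : ℝ) ≤ ((-M - 1).toNat : ℝ) := by
            exact_mod_cast hkey
        _ = -(M:ℝ) - 1 := h2
    have habs2 : |(M:ℝ) + t - s| = -(M:ℝ) + s - t := by
      rw [abs_of_nonpos (by push_cast at hM1 ⊢; linarith)]; ring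
    rw [habs2]
    calc _ ≤ s + (G.dist (c ((i : ZMod n))) (c ((j : ZMod n) + 1)) : ℝ) + (1 - t) :=
          le_trans (min_le_left _ _) (le_trans (min_le_left _ _) (min_le_right _ _))
      _ ≤ -(M:ℝ) + s - t := by linarith
  · -- M = 0 : vertices coincide
    have hij : (j : ZMod n) = (i : ZMod n) := by
      rw [← hMj, hMeq]; simp
    have hcond : c ((i : ZMod n)) = c ((j : ZMod n)) ∧
        c ((i : ZMod n) + 1) = c ((j : ZMod n) + 1) := by rw [hij]; exact ⟨rfl, rfl⟩
    have habs2 : |(M:ℝ) + t - s| = |s - t| := by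
      rw [hMeq]; push_cast; rw [show (0:ℝ) + t - s = -(s - t) by ring, abs_neg]
    rw [habs2]
    refine le_trans (min_le_right _ _) (le_trans (min_le_left _ _) (le_of_eq (if_pos hcond)))
  · -- M ≥ 1 : use term3
    have hM1 : 1 ≤ M := hMgt
    have hkey : G.dist (c ((i : ZMod n) + 1)) (c ((j : ZMod n))) ≤ (M - 1).toNat := by
      have h := dist_le_nat hc ((i : ZMod n) + 1) (M - 1).toNat
      have heq : (i : ZMod n) + 1 + ((M - 1).toNat : ZMod n) = (j : ZMod n) := by
        have h3 : (((M - 1).toNat : ℤ) : ZMod n) = ((M - 1 : ℤ) : ZMod n) := by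
          rw [Int.toNat_of_nonneg (by omega)]
        push_cast at h3 ⊢
        rw [h3]
        push_cast
        rw [← hMj]; ring
      rwa [heq] at h
    have hkey' : (G.dist (c ((i : ZMod n) + 1)) (c ((j : ZMod n))) : ℝ) ≤ (M:ℝ) - 1 := by
      have h2 : (((M - 1).toNat : ℕ) : ℝ) = (M:ℝ) - 1 := by
        rw [show (((M-1).toNat : ℕ) : ℝ) = (((M-1).toNat : ℤ) : ℝ) by push_cast; ring,
          Int.toNat_of_nonneg (by omega)]
        push_cast; ring
      calc (G.dist (c ((i : ZMod n) + 1)) (c ((j : ZMod n))) : ℝ) ≤ (((M - 1).toNat : ℕ) : ℝ) := by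
            exact_mod_cast hkey
        _ = (M:ℝ) - 1 := h2
    have habs2 : (M:ℝ) + t - s ≤ |(M:ℝ) + t - s| := le_abs_self _
    have hM1' : (1:ℝ) ≤ (M:ℝ) := by exact_mod_cast hM1
    calc _ ≤ (1 - s) + (G.dist (c ((i : ZMod n) + 1)) (c ((j : ZMod n))) : ℝ) + t :=
          le_trans (min_le_left _ _) (le_trans (min_le_right _ _) (min_le_left _ _))
      _ ≤ |(M:ℝ) + t - s| := by linarith


lemma extraction (hn : 4 ≤ n) {p q X : ℝ} (h : rdist G n c p q < X) :
    (∃ i j : ℤ, ∃ w : ℝ, 0 ≤ w ∧ w < 2 ∧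
        cdist n p q ≤ cdist n (i:ℝ) (j:ℝ) + w ∧
        (G.dist (c (i : ZMod n)) (c (j : ZMod n)) : ℝ) + w < X) ∨
    (∃ i j : ℤ, ∃ w : ℝ, 0 ≤ w ∧ w < 2 ∧
        cdist n p q ≤ cdist n (i:ℝ) (j:ℝ) + w ∧
        G.dist (c (i : ZMod n)) (c (j : ZMod n)) = 0 ∧
        (cdist n (i:ℝ) (j:ℝ) = 0 →
          (cdist n p q < X ∨
            ∃ x y : ℤ, G.dist (c (x : ZMod n)) (c (y : ZMod n)) = 0 ∧
              (1:ℝ) ≤ cdist n (x:ℝ) (y:ℝ)))) := by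
  have hn0 : 0 < n := by omega
  set i : ℤ := ⌊p⌋ with hi
  set j : ℤ := ⌊q⌋ with hj
  set s : ℝ := Int.fract p with hs
  set t : ℝ := Int.fract q with ht
  have hps : p = i + s := (Int.floor_add_fract p).symm
  have hqt : q = j + t := (Int.floor_add_fract q).symm
  have hs0 : 0 ≤ s := Int.fract_nonneg p
  have hs1 : s < 1 := Int.fract_lt_one p
  have ht0 : 0 ≤ t := Int.fract_nonneg q
  have ht1 : t < 1 := Int.fract_lt_one q
  have hcast1 : ((i + 1 : ℤ) : ZMod n) = (i : ZMod n) + 1 := by push_cast; ring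
  have hcast2 : ((j + 1 : ℤ) : ZMod n) = (j : ZMod n) + 1 := by push_cast; ring
  have hlip1 : cdist n p q ≤ cdist n (i:ℝ) (j:ℝ) + (s + t) := by
    have := cdist_lipschitz n p q (i:ℝ) (j:ℝ)
    rw [show p - (i:ℝ) = s by rw [hps]; ring, show q - (j:ℝ) = t by rw [hqt]; ring,
      abs_of_nonneg hs0, abs_of_nonneg ht0] at this
    linarith
  have hlip2 : cdist n p q ≤ cdist n (i:ℝ) ((j+1 : ℤ):ℝ) + (s + (1 - t)) := by
    have := cdist_lipschitz n p q (i:ℝ) ((j+1:ℤ):ℝ)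
    rw [show p - (i:ℝ) = s by rw [hps]; ring,
      show q - ((j+1:ℤ):ℝ) = -(1 - t) by rw [hqt]; push_cast; ring,
      abs_of_nonneg hs0, abs_neg, abs_of_nonneg (by linarith)] at this
    linarith
  have hlip3 : cdist n p q ≤ cdist n ((i+1:ℤ):ℝ) ((j:ℤ):ℝ) + ((1 - s) + t) := by
    have := cdist_lipschitz n p q ((i+1:ℤ):ℝ) (j:ℝ)
    rw [show p - ((i+1:ℤ):ℝ) = -(1 - s) by rw [hps]; push_cast; ring,
      show q - (j:ℝ) = t by rw [hqt]; ring,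
      abs_neg, abs_of_nonneg (by linarith), abs_of_nonneg ht0] at this
    linarith
  have hlip4 : cdist n p q ≤ cdist n ((i+1:ℤ):ℝ) ((j+1:ℤ):ℝ) + ((1 - s) + (1 - t)) := by
    have := cdist_lipschitz n p q ((i+1:ℤ):ℝ) ((j+1:ℤ):ℝ)
    rw [show p - ((i+1:ℤ):ℝ) = -(1 - s) by rw [hps]; push_cast; ring,
      show q - ((j+1:ℤ):ℝ) = -(1 - t) by rw [hqt]; push_cast; ring,
      abs_neg, abs_of_nonneg (by linarith), abs_neg, abs_of_nonneg (by linarith)] at this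
    linarith
  rw [rdist_def] at h
  have routeCase :
      min (min (s + (G.dist (c ((i : ZMod n))) (c ((j : ZMod n))) : ℝ) + t)
               (s + (G.dist (c ((i : ZMod n))) (c ((j : ZMod n) + 1)) : ℝ) + (1 - t)))
          (min ((1 - s) + (G.dist (c ((i : ZMod n) + 1)) (c ((j : ZMod n))) : ℝ) + t)
               ((1 - s) + (G.dist (c ((i : ZMod n) + 1)) (c ((j : ZMod n) + 1)) : ℝ) + (1 - t))) < X →
      (∃ i j : ℤ, ∃ w : ℝ, 0 ≤ w ∧ w < 2 ∧
        cdist n p q ≤ cdist n (i:ℝ) (j:ℝ) + w ∧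
        (G.dist (c (i : ZMod n)) (c (j : ZMod n)) : ℝ) + w < X) := by
    intro hr
    rcases min_lt_iff.mp hr with hr1 | hr2
    · rcases min_lt_iff.mp hr1 with h1 | h2
      · exact ⟨i, j, s + t, by linarith, by linarith, hlip1, by linarith⟩
      · refine ⟨i, j + 1, s + (1 - t), by linarith, by linarith, hlip2, ?_⟩
        rw [hcast2]; linarith
    · rcases min_lt_iff.mp hr2 with h3 | h4
      · refine ⟨i + 1, j, (1 - s) + t, by linarith, by linarith, hlip3, ?_⟩
        rw [hcast1]; linarith
      · refine ⟨i + 1, j + 1, |s - t|, abs_nonneg _, ?_, ?_, ?_⟩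
        · rcases abs_cases (s - t) with ⟨he, _⟩ | ⟨he, _⟩ <;> rw [he] <;> linarith
        · have := cdist_diff_le n p q ((i+1:ℤ):ℝ) ((j+1:ℤ):ℝ)
          have heq : (p - q) - (((i+1:ℤ):ℝ) - ((j+1:ℤ):ℝ)) = s - t := by
            rw [hps, hqt]; push_cast; ring
          rwa [heq] at this
        · rw [hcast1, hcast2]
          rcases abs_cases (s - t) with ⟨he, _⟩ | ⟨he, _⟩ <;> rw [he] <;> linarith
  rcases min_lt_iff.mp h with hroute | hrest
  · exact Or.inl (routeCase hroute)
  rcases min_lt_iff.mp hrest with hite1 | hite2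
  · by_cases hcond : c ((i : ZMod n)) = c ((j : ZMod n)) ∧
        c ((i : ZMod n) + 1) = c ((j : ZMod n) + 1)
    · rw [if_pos hcond] at hite1
      refine Or.inr ⟨i, j, s + t, by linarith, by linarith, hlip1, ?_, ?_⟩
      · rw [hcond.1]; exact SimpleGraph.dist_self
      · intro hc0
        left
        -- cdist n i j = 0 forces n ∣ j - i, and then cdist p q = |s - t| < X
        obtain ⟨d, hd⟩ : (n:ℤ) ∣ (j - i) := by
          rw [cdist_int hn0] at hc0
          have hm0 : 0 ≤ (j - i) % (n:ℤ) := Int.emod_nonneg _ (by exact_mod_cast hn0.ne')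
          have hmn : (j - i) % (n:ℤ) < n := Int.emod_lt_of_pos _ (by exact_mod_cast hn0)
          have : (min ((j - i) % (n:ℤ)) ((n:ℤ) - (j - i) % n) : ℤ) = 0 := by exact_mod_cast hc0
          have hm : (j - i) % (n:ℤ) = 0 := by omega
          exact Int.dvd_of_emod_eq_zero hm
        have hn4 : (4:ℝ) ≤ (n:ℝ) := by exact_mod_cast hn
        rcases le_or_gt t s with hts | hst
        · have : cdist n p q = min (s - t) ((n:ℝ) - (s - t)) := by
            apply cdist_eq_of (-d) (by linarith) (by linarith)
            rw [hps, hqt]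
            have : (i:ℝ) - j = -((d:ℝ) * n) := by
              have : ((j - i : ℤ):ℝ) = ((n * d : ℤ):ℝ) := by exact_mod_cast hd
              push_cast at this; linarith
            push_cast; linarith
          rw [this, min_eq_left (by linarith)]
          have habs : s - t = |s - t| := (abs_of_nonneg (by linarith)).symm
          rw [habs]; exact hite1
        · have : cdist n p q = min ((n:ℝ) + (s - t)) ((n:ℝ) - ((n:ℝ) + (s - t))) := by
            apply cdist_eq_of (-d - 1) (by linarith) (by linarith)
            rw [hps, hqt]
            have : (i:ℝ) - j = -((d:ℝ) * n) := by
              have : ((j - i : ℤ):ℝ) = ((n * d : ℤ):ℝ) := by exact_mod_cast hd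
              push_cast at this; linarith
            push_cast; linarith
          rw [this, min_eq_right (by linarith)]
          have habs : (n:ℝ) - ((n:ℝ) + (s - t)) = |s - t| := by
            rw [abs_of_neg (by linarith)]; ring
          rw [habs]; exact hite1
    · rw [if_neg hcond] at hite1
      exact Or.inl (routeCase hite1)
  · by_cases hcond : c ((i : ZMod n)) = c ((j : ZMod n) + 1) ∧
        c ((i : ZMod n) + 1) = c ((j : ZMod n))
    · rw [if_pos hcond] at hite2
      refine Or.inr ⟨i, j + 1, s + (1 - t), by linarith, by linarith, hlip2, ?_, ?_⟩
      · rw [hcast2, hcond.1]; exact SimpleGraph.dist_self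
      · intro hc0
        right
        -- i ≡ j + 1 mod n; then c ((i-1 : ℤ)) = c j = c (i+1): doubled edge
        obtain ⟨d, hd⟩ : (n:ℤ) ∣ (j + 1 - i) := by
          rw [cdist_int hn0] at hc0
          have hm0 : 0 ≤ (j + 1 - i) % (n:ℤ) := Int.emod_nonneg _ (by exact_mod_cast hn0.ne')
          have hmn : (j + 1 - i) % (n:ℤ) < n := Int.emod_lt_of_pos _ (by exact_mod_cast hn0)
          have : (min ((j + 1 - i) % (n:ℤ)) ((n:ℤ) - (j + 1 - i) % n) : ℤ) = 0 := by
            exact_mod_cast hc0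
          have hm : (j + 1 - i) % (n:ℤ) = 0 := by omega
          exact Int.dvd_of_emod_eq_zero hm
        have hji : ((j : ℤ) : ZMod n) = ((i - 1 : ℤ) : ZMod n) := by
          have : ((j + 1 - i : ℤ) : ZMod n) = 0 := by
            rw [hd]; push_cast; simp [ZMod.natCast_self]
          push_cast at this ⊢
          linear_combination this
        refine ⟨i - 1, i + 1, ?_, ?_⟩
        · rw [← hji, hcast1, ← hcond.2]
          exact SimpleGraph.dist_self
        · rw [cdist_int hn0]
          have h2 : (i + 1 - (i - 1)) % (n:ℤ) = 2 := by
            rw [show i + 1 - (i - 1) = 2 by ring]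
            exact Int.emod_eq_of_lt (by norm_num) (by exact_mod_cast (by omega : 2 < n))
          rw [h2]
          have hmin : min (2:ℤ) ((n:ℤ) - 2) = 2 := min_eq_left (by
            have : (4:ℤ) ≤ n := by exact_mod_cast hn
            omega)
          rw [hmin]
          norm_num
    · rw [if_neg hcond] at hite2
      exact Or.inl (routeCase hite2)


lemma propagation (hc : IsCycle G n c) (hn : 4 ≤ n) {x y : ℤ}
    (h : (G.dist (c (x : ZMod n)) (c (y : ZMod n)) : ℝ) < cdist n (x:ℝ) (y:ℝ)) :
    ∃ i j : ℤ, cdist n (i:ℝ) (j:ℝ) = ((n/2 : ℕ) : ℝ) ∧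
      (G.dist (c (i : ZMod n)) (c (j : ZMod n)) : ℝ) < ((n/2 : ℕ) : ℝ) := by
  have hn0 : 0 < n := by omega
  have hnz : (n:ℤ) ≠ 0 := by exact_mod_cast hn0.ne'
  have hnpos : (0:ℤ) < n := by exact_mod_cast hn0
  -- main argument, assuming the short arc is in the forward direction
  have main : ∀ x y : ℤ, (G.dist (c (x : ZMod n)) (c (y : ZMod n)) : ℤ) < (y - x) % n →
      (y - x) % n ≤ (n:ℤ) - (y - x) % n →
      ∃ i j : ℤ, cdist n (i:ℝ) (j:ℝ) = ((n/2 : ℕ) : ℝ) ∧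
        (G.dist (c (i : ZMod n)) (c (j : ZMod n)) : ℝ) < ((n/2 : ℕ) : ℝ) := by
    intro x y hD harc
    set m : ℤ := (y - x) % n with hm
    have hm0 : 0 ≤ m := Int.emod_nonneg _ hnz
    have hmn : m < n := Int.emod_lt_of_pos _ hnpos
    have hm1 : 1 ≤ m := by
      have : (0:ℤ) ≤ G.dist (c (x : ZMod n)) (c (y : ZMod n)) := by positivity
      omega
    have hH2' : 2 * ((n/2 : ℕ) : ℤ) ≤ (n:ℤ) ∧ (n:ℤ) ≤ 2 * ((n/2 : ℕ) : ℤ) + 1 ∧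
        0 ≤ ((n/2 : ℕ) : ℤ) := by omega
    set H : ℤ := ((n/2 : ℕ) : ℤ) with hH
    have hH2 := hH2'
    have hmH : m ≤ H := by omega
    obtain ⟨d, hd⟩ : ∃ d : ℤ, y - x = n * d + m := ⟨(y - x) / n, by rw [hm]; exact (Int.mul_ediv_add_emod _ _).symm⟩
    refine ⟨x, y + (H - m), ?_, ?_⟩
    · rw [cdist_int hn0]
      have hmod : (y + (H - m) - x) % (n:ℤ) = H := by
        rw [show y + (H - m) - x = H + d * n by linear_combination hd]
        rw [Int.add_mul_emod_self_right]
        exact Int.emod_eq_of_lt (by omega) (by omega)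
      rw [hmod, min_eq_left (by omega), hH]
      norm_cast
    · -- walk from x to y realizing the distance, then along the cycle
      have hreach : G.Reachable (c (x : ZMod n)) (c (y : ZMod n)) := by
        have hr := reachable_cy hc (x : ZMod n) m.toNat
        have heq : (x : ZMod n) + (m.toNat : ZMod n) = (y : ZMod n) := by
          have h1 : ((m.toNat : ℤ) : ZMod n) = ((m : ℤ) : ZMod n) := by
            rw [Int.toNat_of_nonneg hm0]
          have h2 : ((x + m : ℤ) : ZMod n) = ((y : ℤ) : ZMod n) := by
            rw [ZMod.intCast_eq_intCast_iff]
            exact Int.modEq_iff_dvd.mpr ⟨d, by linear_combination hd⟩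
          push_cast at h1 h2 ⊢
          rw [h1, ← h2]
        rwa [heq] at hr
      obtain ⟨W1, hW1⟩ := hreach.exists_walk_length_eq_dist
      obtain ⟨W2, hW2⟩ := walk_exists hc (y : ZMod n) (H - m).toNat
      have heq2 : (y : ZMod n) + ((H - m).toNat : ZMod n) = ((y + (H - m) : ℤ) : ZMod n) := by
        have h1 : (((H - m).toNat : ℤ) : ZMod n) = ((H - m : ℤ) : ZMod n) := by
          rw [Int.toNat_of_nonneg (by omega)]
        push_cast at h1 ⊢
        rw [h1]
      have hdist := SimpleGraph.dist_le ((W1.append (W2.copy rfl (congrArg c heq2))))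
      rw [SimpleGraph.Walk.length_append, SimpleGraph.Walk.length_copy, hW1, hW2] at hdist
      have hfin : (G.dist (c (x : ZMod n)) (c ((y + (H - m) : ℤ) : ZMod n)) : ℤ) < H := by
        have h1 : ((H - m).toNat : ℤ) = H - m := Int.toNat_of_nonneg (by omega)
        have h2 : (G.dist (c (x : ZMod n)) (c ((y + (H - m) : ℤ) : ZMod n)) : ℤ) ≤
            (G.dist (c (x : ZMod n)) (c (y : ZMod n)) : ℤ) + ((H - m).toNat : ℤ) := by
          exact_mod_cast hdist
        omega
      calc (G.dist (c (x : ZMod n)) (c ((y + (H - m) : ℤ) : ZMod n)) : ℝ)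
          < (H : ℝ) := by exact_mod_cast hfin
        _ = ((n/2 : ℕ) : ℝ) := by rw [hH]; norm_cast
  -- now reduce to the two orientations
  rw [cdist_int hn0] at h
  set m : ℤ := (y - x) % n with hm
  have hm0 : 0 ≤ m := Int.emod_nonneg _ hnz
  have hmn : m < n := Int.emod_lt_of_pos _ hnpos
  have hD : (G.dist (c (x : ZMod n)) (c (y : ZMod n)) : ℤ) < min m ((n:ℤ) - m) := by
    exact_mod_cast h
  rcases le_total m ((n:ℤ) - m) with harc | harc
  · exact main x y (by rw [← hm]; omega) (by rw [← hm]; omega)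
  · have hm1 : 1 ≤ m := by
      have : (0:ℤ) ≤ G.dist (c (x : ZMod n)) (c (y : ZMod n)) := by positivity
      omega
    have hrev : (x - y) % (n:ℤ) = n - m := by
      obtain ⟨d, hd⟩ : ∃ d : ℤ, y - x = n * d + m :=
        ⟨(y - x) / n, by rw [hm]; exact (Int.mul_ediv_add_emod _ _).symm⟩
      rw [show x - y = (n - m) + (-d - 1) * n by linear_combination -hd, Int.add_mul_emod_self_right]
      exact Int.emod_eq_of_lt (by omega) (by omega)
    apply main y x
    · rw [hrev, SimpleGraph.dist_comm]
      omega
    · rw [hrev]; omega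

lemma nat_bound {n : ℕ} (hn : 4 ≤ n) {z : ℤ} (h : (n:ℝ)/2 - 2 < (z:ℝ)) :
    ((n/2 : ℕ):ℝ) - 1 ≤ (z:ℝ) := by
  have h2 : (n:ℤ) - 4 < 2 * z := by
    have : (n:ℝ) - 4 < 2*z := by linarith
    exact_mod_cast this
  have h3 : ((n/2 : ℕ):ℤ) - 1 ≤ z := by omega
  exact_mod_cast h3

/-- Proposition `aadist`.  Let `Γ` be a graph and let `f : C → Γ` be a cycle
of length `|C| ≥ 4`.  (1) If `f` is not isometric, then there exist vertices `u, v` of `C`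
with `d_C(u,v) ≥ ⌊|C|/2⌋ − 1` and `d_Γ(f(u), f(v)) < d_C(u,v)`.  (2) If, for some
`ξ ∈ (0,1)`, `f` is not `ξ`-almost isometric, then there exist vertices `u, v` of `C` with
`d_C(u,v) ≥ ⌊|C|/2⌋ − 1` and `d_Γ(f(u), f(v)) < ξ·d_C(u,v)`.  (The vertices of the cycle
graph `C` are the integer points of its realization.) -/
theorem prop_aadist {V : Type*} (G : SimpleGraph V) (n : ℕ) (hn : 4 ≤ n)
    (c : ZMod n → V) (hc : IsCycle G n c) :
    (¬ IsIsometricCycle G n c →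
      ∃ i j : ℤ, ((n / 2 : ℕ) : ℝ) - 1 ≤ cdist n (i : ℝ) (j : ℝ) ∧
        rdist G n c (i : ℝ) (j : ℝ) < cdist n (i : ℝ) (j : ℝ)) ∧
    (∀ ξ : ℝ, 0 < ξ → ξ < 1 → ¬ IsAlmostIsometricCycle G n c ξ →
      ∃ i j : ℤ, ((n / 2 : ℕ) : ℝ) - 1 ≤ cdist n (i : ℝ) (j : ℝ) ∧
        rdist G n c (i : ℝ) (j : ℝ) < ξ * cdist n (i : ℝ) (j : ℝ)) := by
  have hn0 : 0 < n := by omega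
  have hnz : (n:ℤ) ≠ 0 := by exact_mod_cast hn0.ne'
  have hnpos : (0:ℤ) < n := by exact_mod_cast hn0
  have hn4 : (4:ℝ) ≤ (n:ℝ) := by exact_mod_cast hn
  -- from a vertex shortcut pair, conclude via propagation
  have finish : ∀ x y : ℤ, (G.dist (c (x : ZMod n)) (c (y : ZMod n)) : ℝ) < cdist n (x:ℝ) (y:ℝ) →
      ∃ i j : ℤ, ((n / 2 : ℕ) : ℝ) - 1 ≤ cdist n (i : ℝ) (j : ℝ) ∧
        rdist G n c (i : ℝ) (j : ℝ) < cdist n (i : ℝ) (j : ℝ) := by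
    intro x y hxy
    obtain ⟨i', j', hcd', hlt'⟩ := propagation hc hn hxy
    refine ⟨i', j', by rw [hcd']; linarith, ?_⟩
    rw [hcd']
    exact lt_of_le_of_lt (rdist_le_dist G n c i' j') hlt'
  constructor
  · intro hniso
    obtain ⟨p, q, hne⟩ : ∃ p q : ℝ, rdist G n c p q ≠ cdist n p q := by
      by_contra hcon
      push_neg at hcon
      exact hniso fun p q => hcon p q
    have hlt : rdist G n c p q < cdist n p q := lt_of_le_of_ne (rdist_le_cdist hc p q) hne
    rcases extraction hn hlt with ⟨i, j, w, hw0, hw2, hcd, hDX⟩ |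
      ⟨i, j, w, hw0, hw2, hcd, hD0, hspec⟩
    · exact finish i j (by linarith)
    · rcases eq_or_ne (cdist n (i:ℝ) (j:ℝ)) 0 with h0 | h0
      · rcases hspec h0 with habs | ⟨x, y, hdxy, hcxy⟩
        · exact absurd habs (lt_irrefl _)
        · exact finish x y (by rw [hdxy]; push_cast; linarith)
      · have h1 : (1:ℝ) ≤ cdist n (i:ℝ) (j:ℝ) := by
          rw [cdist_int hn0] at h0 ⊢
          have hm0 : 0 ≤ (j - i) % (n:ℤ) := Int.emod_nonneg _ hnz
          have hmn : (j - i) % (n:ℤ) < n := Int.emod_lt_of_pos _ hnpos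
          have hne0 : (min ((j-i)%(n:ℤ)) ((n:ℤ) - (j-i)%n)) ≠ 0 := by
            intro hz
            exact h0 (by rw [hz]; norm_num)
          have : (1:ℤ) ≤ min ((j-i)%(n:ℤ)) ((n:ℤ) - (j-i)%n) := by omega
          exact_mod_cast this
        exact finish i j (by rw [hD0]; push_cast; linarith)
  · intro ξ hξ0 hξ1 hnal
    rw [IsAlmostIsometricCycle] at hnal
    push_neg at hnal
    obtain ⟨p, q, hap, hlt⟩ := hnal
    have hcpq : cdist n p q = (n:ℝ)/2 := hap
    have bound : ∀ i j : ℤ, ∀ w : ℝ, 0 ≤ w → w < 2 → cdist n p q ≤ cdist n (i:ℝ) (j:ℝ) + w →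
        ((n / 2 : ℕ) : ℝ) - 1 ≤ cdist n (i : ℝ) (j : ℝ) ∧ (n:ℝ)/2 - w ≤ cdist n (i:ℝ) (j:ℝ) := by
      intro i j w hw0 hw2 hcd
      have hzle : (n:ℝ)/2 - w ≤ cdist n (i:ℝ) (j:ℝ) := by rw [hcpq] at hcd; linarith
      constructor
      · rw [cdist_int hn0] at hzle ⊢
        exact nat_bound hn (by linarith)
      · exact hzle
    rcases extraction hn hlt with ⟨i, j, w, hw0, hw2, hcd, hDX⟩ |
      ⟨i, j, w, hw0, hw2, hcd, hD0, _⟩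
    · obtain ⟨hb1, hb2⟩ := bound i j w hw0 hw2 hcd
      refine ⟨i, j, hb1, ?_⟩
      have h1 : ξ * w ≤ w := mul_le_of_le_one_left hw0 hξ1.le
      have h2 : ξ * ((n:ℝ)/2 - w) ≤ ξ * cdist n (i:ℝ) (j:ℝ) :=
        mul_le_mul_of_nonneg_left hb2 hξ0.le
      have h3 := rdist_le_dist G n c i j
      have h4 : ξ * ((n:ℝ)/2 - w) = ξ * ((n:ℝ)/2) - ξ * w := by ring
      linarith
    · obtain ⟨hb1, hb2⟩ := bound i j w hw0 hw2 hcd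
      refine ⟨i, j, hb1, ?_⟩
      have h3 := rdist_le_dist G n c i j
      rw [hD0] at h3
      have hpos : 0 < cdist n (i:ℝ) (j:ℝ) := by linarith
      calc rdist G n c (i:ℝ) (j:ℝ) ≤ ((0:ℕ):ℝ) := h3
        _ = 0 := by norm_num
        _ < ξ * cdist n (i:ℝ) (j:ℝ) := mul_pos hξ0 hpos


end ShortcutGraphs
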